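/- Let g be a nonzero Laurent polynomial over ℚ in the variable q, let ε : ℕ → ℤ take only the values 1 and -1, and let p : ℕ → ℚ[q, q⁻¹] be a sequence of nonzero Laurent polynomials such that for every n ≥ 1 both recurrences hold: p(n) = -q·p(n-1) + ε(n)·q^(3n)·g, and p(n+1) = q⁴·p(n-1) + (q³ - q)·p(n). Then there exists a positive integer N such that for all n ≥ N, deg p(n+1) = deg p(n) + 3. -/

import Mathlib

open LaurentPolynomial

/-- The degree of a Laurent polynomial: the largest exponent of the variable occurring
with nonzero coefficient (junk value `0` for the zero polynomial). -/
noncomputable def ldeg (f : LaurentPolynomial ℚ) : ℤ :=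
  (LaurentPolynomial.degree f).unbotD 0

/-!
In `p n = -q * p (n - 1) + ε n * q ^ (3 * n) * g` the forcing term has degree `3 * n + deg g`,
which grows by 3 per step, while multiplication by `-q` raises the degree by only 1. Hence
`deg p n ≤ max (deg p 0 + n) (3 * n + deg g)` by induction, and as soon as
`deg p 0 < deg g + 2 * n` the forcing term strictly dominates, so `deg p n = 3 * n + deg g`.
-/

namespace LaurentPolynomial

variable {R : Type*}

section Semiring
variable [Semiring R]

theorem degree_add_le (f g : R[T;T⁻¹]) : (f + g).degree ≤ max f.degree g.degree :=
  AddMonoidAlgebra.supDegree_add_le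

theorem degree_add_eq_right_of_degree_lt {f g : R[T;T⁻¹]} (h : f.degree < g.degree) :
    (f + g).degree = g.degree :=
  AddMonoidAlgebra.supDegree_add_eq_right h

theorem degree_T_mul (n : ℤ) (f : R[T;T⁻¹]) : (T n * f).degree = n + f.degree := by
  rw [degree, T, AddMonoidAlgebra.support_coeff_single_mul f 1 (by simp), Finset.max,
    Finset.sup_map, degree, Finset.max,
    Finset.apply_sup_eq_sup_comp_of_linearOrder ((n : WithBot ℤ) + ·)
      (fun _ _ h => add_le_add_right h _) (WithBot.add_bot _)]
  rfl

end Semiring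

theorem degree_neg [Ring R] (f : R[T;T⁻¹]) : (-f).degree = f.degree :=
  AddMonoidAlgebra.supDegree_neg

theorem degree_zsmul [Ring R] [IsDomain R] [CharZero R] {c : ℤ} (hc : c ≠ 0) (f : R[T;T⁻¹]) :
    (c • f).degree = f.degree := by
  rw [degree, AddMonoidAlgebra.coeff_smul, Finsupp.support_smul_eq hc]; rfl

end LaurentPolynomial

theorem degree_le_ldeg (f : ℚ[T;T⁻¹]) : f.degree ≤ ldeg f := by
  cases h : f.degree with
  | bot => exact bot_le
  | coe d => simp [ldeg, h]

theorem ldeg_eq_of_degree_eq {f : ℚ[T;T⁻¹]} {d : ℤ} (h : f.degree = d) : ldeg f = d := by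
  simp [ldeg, h]

theorem degree_eq_ldeg {f : ℚ[T;T⁻¹]} (hf : f ≠ 0) : f.degree = ldeg f := by
  obtain ⟨d, hd⟩ := WithBot.ne_bot_iff_exists.mp (degree_eq_bot_iff.not.mpr hf)
  rw [← hd, ldeg_eq_of_degree_eq hd.symm]

section TwistRecurrence

variable {g : ℚ[T;T⁻¹]} {ε : ℕ → ℤ} {p : ℕ → ℚ[T;T⁻¹]}

theorem degree_le_of_twist_recurrence (hε : ∀ n, ε n ≠ 0)
    (hrec : ∀ n : ℕ, 1 ≤ n → p n = -(T 1) * p (n - 1) + ε n • (T (3 * (n : ℤ)) * g)) (n : ℕ) :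
    (p n).degree ≤ ↑(max (ldeg (p 0) + n) (3 * n + ldeg g)) := by
  induction n with
  | zero => exact (degree_le_ldeg _).trans (mod_cast by omega)
  | succ n ih =>
    rw [hrec (n + 1) n.succ_pos, Nat.add_sub_cancel]
    refine (degree_add_le _ _).trans (max_le ?_ ?_)
    · rw [neg_mul, degree_neg, degree_T_mul]
      grw [ih]
      exact_mod_cast (by omega)
    · rw [degree_zsmul (hε _), degree_T_mul]
      grw [degree_le_ldeg g]
      exact_mod_cast (by omega)

theorem degree_eq_of_twist_recurrence (hg : g ≠ 0) (hε : ∀ n, ε n ≠ 0)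
    (hrec : ∀ n : ℕ, 1 ≤ n → p n = -(T 1) * p (n - 1) + ε n • (T (3 * (n : ℤ)) * g))
    {n : ℕ} (hn : 1 ≤ n) (hlarge : ldeg (p 0) < ldeg g + 2 * n) :
    (p n).degree = ↑(3 * n + ldeg g) := by
  have hforcing : (ε n • (T (3 * (n : ℤ)) * g)).degree = ↑(3 * n + ldeg g) := by
    rw [degree_zsmul (hε n), degree_T_mul, degree_eq_ldeg hg]
    rfl
  have hdominant : (-(T 1) * p (n - 1)).degree < (ε n • (T (3 * (n : ℤ)) * g)).degree := by
    rw [hforcing, neg_mul, degree_neg, degree_T_mul]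
    grw [degree_le_of_twist_recurrence hε hrec (n - 1)]
    exact_mod_cast (by omega)
  rw [hrec n hn, degree_add_eq_right_of_degree_lt hdominant, hforcing]

end TwistRecurrence

theorem stmt0_general (g : LaurentPolynomial ℚ) (hg : g ≠ 0)
    (ε : ℕ → ℤ) (hε : ∀ n, ε n = 1 ∨ ε n = -1)
    (p : ℕ → LaurentPolynomial ℚ)
    (hrec1 : ∀ n : ℕ, 1 ≤ n → p n = -(T 1) * p (n - 1) + ε n • (T (3 * (n : ℤ)) * g)) :
    ∃ N : ℕ, 0 < N ∧ ∀ n, N ≤ n → ldeg (p (n + 1)) = ldeg (p n) + 3 := by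
  have hε' : ∀ n, ε n ≠ 0 := fun n => by rcases hε n with h | h <;> simp [h]
  have hdeg : ∀ n, (ldeg (p 0) - ldeg g).toNat + 1 ≤ n → ldeg (p n) = 3 * n + ldeg g :=
    fun n hn => ldeg_eq_of_degree_eq <|
      degree_eq_of_twist_recurrence hg hε' hrec1 (by omega) (by omega)
  refine ⟨(ldeg (p 0) - ldeg g).toNat + 1, by omega, fun n hn => ?_⟩
  rw [hdeg n hn, hdeg (n + 1) (by omega)]
  push_cast
  ring

theorem stmt0 (g : LaurentPolynomial ℚ) (hg : g ≠ 0)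
    (ε : ℕ → ℤ) (hε : ∀ n, ε n = 1 ∨ ε n = -1)
    (p : ℕ → LaurentPolynomial ℚ) (hp : ∀ n, p n ≠ 0)
    (hrec1 : ∀ n : ℕ, 1 ≤ n → p n = -(T 1) * p (n - 1) + ε n • (T (3 * (n : ℤ)) * g))
    (hrec2 : ∀ n : ℕ, 1 ≤ n → p (n + 1) = T 4 * p (n - 1) + (T 3 - T 1) * p n) :
    ∃ N : ℕ, 0 < N ∧ ∀ n, N ≤ n → ldeg (p (n + 1)) = ldeg (p n) + 3 :=
  stmt0_general g hg ε hε p hrec1
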